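/- arXiv:1707.08017 — 3 statements merged into one kernel-verified Lean document; each statement's English description precedes it below -/
import Mathlib

section
/- If ⊢ is a monotonic, regular and compact consequence relation on a sentential language, then ⊢ has a truth-adequate mixed semantics over a set of at most 4 truth values; over at most 3 truth values if ⊢ is moreover reflexive or transitive; and over at most 2 truth values if ⊢ is moreover both reflexive and transitive. -/
universe u v w x

/-- Mixed truth-relation. -/
def Mixed {V : Type*} (Dp Dc : Set V) (γ δ : Set V) : Prop :=
  γ ⊆ Dp → (δ ∩ Dc).Nonempty

def Monotonic {L : Type*} (Cons : Set L → Set L → Prop) : Prop :=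
  ∀ ⦃Γ₁ Γ₂ Δ₁ Δ₂ : Set L⦄, Γ₁ ⊆ Γ₂ → Δ₁ ⊆ Δ₂ → Cons Γ₁ Δ₁ → Cons Γ₂ Δ₂

def ReflRel {L : Type*} (Cons : Set L → Set L → Prop) : Prop :=
  ∀ F : L, Cons {F} {F}

def TransRel {L : Type*} (Cons : Set L → Set L → Prop) : Prop :=
  ∀ Γ Δ : Set L, ¬ Cons Γ Δ →
    ∃ Γ' Δ' : Set L, Γ ⊆ Γ' ∧ Δ ⊆ Δ' ∧ ¬ Cons Γ' Δ' ∧ Γ' ∪ Δ' = Set.univ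

def LRPermeable {L : Type*} (Cons : Set L → Set L → Prop) : Prop :=
  ∀ Γ Δ S : Set L, Cons (Γ ∪ S) Δ → Cons Γ (S ∪ Δ)

def RLPermeable {L : Type*} (Cons : Set L → Set L → Prop) : Prop :=
  ∀ Γ Δ S : Set L, Cons Γ (S ∪ Δ) → Cons (Γ ∪ S) Δ

def Permeable {L : Type*} (Cons : Set L → Set L → Prop) : Prop :=
  LRPermeable Cons ∨ RLPermeable Cons

def CompactRel {L : Type*} (Cons : Set L → Set L → Prop) : Prop :=
  ∀ Γ Δ : Set L, Cons Γ Δ →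
    ∃ Γ' Δ' : Set L, Γ' ⊆ Γ ∧ Δ' ⊆ Δ ∧ Γ'.Finite ∧ Δ'.Finite ∧ Cons Γ' Δ'

/-- Sound and complete intersective mixed semantics. -/
def IsIMS {L V W Λ : Type*} (Cons : Set L → Set L → Prop)
    (interp : L → W → V) (Dp Dc : Λ → Set V) : Prop :=
  ∀ Γ Δ : Set L, Cons Γ Δ ↔
    ∀ (w : W) (l : Λ), Mixed (Dp l) (Dc l)
      ((fun F => interp F w) '' Γ) ((fun F => interp F w) '' Δ)

/-- Sound and complete mixed semantics (single pair). -/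
def IsMixedSem {L V W : Type*} (Cons : Set L → Set L → Prop)
    (interp : L → W → V) (Dp Dc : Set V) : Prop :=
  ∀ Γ Δ : Set L, Cons Γ Δ ↔
    ∀ w : W, Mixed Dp Dc ((fun F => interp F w) '' Γ) ((fun F => interp F w) '' Δ)

/-- Formulae of a sentential language. -/
inductive Formula (A : Type u) (C : Type u) (ar : C → ℕ) : Type u
  | atom : A → Formula A C ar
  | conn : (c : C) → (Fin (ar c) → Formula A C ar) → Formula A C ar

/-- Substitution induced by a map from atoms to formulae. -/
def Formula.subst {A C : Type u} {ar : C → ℕ} (σ : A → Formula A C ar) :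
    Formula A C ar → Formula A C ar
  | .atom a => σ a
  | .conn c Fs => .conn c (fun i => (Fs i).subst σ)

def SubstInvariant {A C : Type u} {ar : C → ℕ}
    (Cons : Set (Formula A C ar) → Set (Formula A C ar) → Prop) : Prop :=
  ∀ (σ : A → Formula A C ar) (Γ Δ : Set (Formula A C ar)),
    Cons Γ Δ → Cons (Formula.subst σ '' Γ) (Formula.subst σ '' Δ)

/-- Evaluation of formulae from truth-functions and a valuation. -/
def evalF {A C : Type u} {ar : C → ℕ} {V : Type v}
    (tf : (c : C) → (Fin (ar c) → V) → V) (v : A → V) : Formula A C ar → V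
  | .atom a => v a
  | .conn c Fs => tf c (fun i => evalF tf v (Fs i))

/-- Truth-functionality of an interpretation w.r.t. truth-functions. -/
def Compositional {A C : Type u} {ar : C → ℕ} {V : Type v} {W : Type w}
    (interp : Formula A C ar → W → V)
    (tf : (c : C) → (Fin (ar c) → V) → V) : Prop :=
  ∀ (c : C) (Fs : Fin (ar c) → Formula A C ar) (w : W),
    interp (Formula.conn c Fs) w = tf c (fun i => interp (Fs i) w)

/-- Regular connectives. -/
def RegularRel {A C : Type u} {ar : C → ℕ}
    (Cons : Set (Formula A C ar) → Set (Formula A C ar) → Prop) : Prop :=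
  ∀ c : C, ∃ Bp Bc : Set (Set (Fin (ar c)) × Set (Fin (ar c))),
    ∀ (Γ Δ : Set (Formula A C ar)) (Fs : Fin (ar c) → Formula A C ar),
      (Cons (Γ ∪ {Formula.conn c Fs}) Δ ↔
        ∀ B ∈ Bp, Cons (Γ ∪ Fs '' B.1) (Fs '' B.2 ∪ Δ)) ∧
      (Cons Γ ({Formula.conn c Fs} ∪ Δ) ↔
        ∀ B ∈ Bc, Cons (Γ ∪ Fs '' B.1) (Fs '' B.2 ∪ Δ))

/-- `Cons` has a truth-adequate mixed semantics over a set of at most `n`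
truth values. -/
def HasTAMixedCard {A C : Type u} {ar : C → ℕ}
    (Cons : Set (Formula A C ar) → Set (Formula A C ar) → Prop) (n : ℕ) : Prop :=
  ∃ (V : Type) (_ : Fintype V), Fintype.card V ≤ n ∧
    ∃ (W : Type u) (interp : Formula A C ar → W → V)
      (tf : (c : C) → (Fin (ar c) → V) → V) (Dp Dc : Set V),
      IsMixedSem Cons interp Dp Dc ∧ Compositional interp tf


open scoped Classical

/-! ### Auxiliary machinery for statement 17 -/

/-- Maximal counterexample. -/
def MaxCE {L : Type u} (Cons : Set L → Set L → Prop) (Γ Δ : Set L) : Prop :=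
  ¬ Cons Γ Δ ∧ (∀ F ∉ Γ, Cons (insert F Γ) Δ) ∧ (∀ F ∉ Δ, Cons Γ (insert F Δ))

lemma chainFin {α : Type u} {c : Set (Set α)} (hc : IsChain (· ⊆ ·) c)
    (hne : c.Nonempty) : ∀ s : Finset α, ↑s ⊆ ⋃₀ c → ∃ u ∈ c, ↑s ⊆ u := by
  classical
  intro s
  induction s using Finset.induction_on with
  | empty => intro _; obtain ⟨u, hu⟩ := hne; exact ⟨u, hu, by simp⟩
  | @insert a s ha ih =>
    intro hsub
    obtain ⟨u, hu, hsu⟩ := ih (by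
      intro x hx; exact hsub (by simp [hx]))
    obtain ⟨v, hv, hav⟩ := hsub (by simp : a ∈ (↑(insert a s) : Set α))
    rcases hc.total hu hv with h | h
    · exact ⟨v, hv, by
        intro x hx
        rcases Finset.mem_insert.mp (by exact_mod_cast hx) with rfl | hxs
        · exact hav
        · exact h (hsu hxs)⟩
    · exact ⟨u, hu, by
        intro x hx
        rcases Finset.mem_insert.mp (by exact_mod_cast hx) with rfl | hxs
        · exact h hav
        · exact hsu hxs⟩

lemma exists_maxCE {L : Type u} {Cons : Set L → Set L → Prop}
    (hmono : Monotonic Cons) (hcomp : CompactRel Cons)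
    {Γ₀ Δ₀ : Set L} (h : ¬ Cons Γ₀ Δ₀) :
    ∃ Γ Δ, Γ₀ ⊆ Γ ∧ Δ₀ ⊆ Δ ∧ MaxCE Cons Γ Δ := by
  classical
  set S : Set (Set (L ⊕ L)) := {T | ¬ Cons (Sum.inl ⁻¹' T) (Sum.inr ⁻¹' T)} with hS
  have hub : ∀ c ⊆ S, IsChain (· ⊆ ·) c → c.Nonempty → ∃ ub ∈ S, ∀ s ∈ c, s ⊆ ub := by
    intro c hcS hc hne
    refine ⟨⋃₀ c, ?_, fun s hs => Set.subset_sUnion_of_mem hs⟩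
    intro hcons
    obtain ⟨Γ', Δ', hΓ', hΔ', hΓf, hΔf, hC⟩ := hcomp _ _ hcons
    have hfin : (Sum.inl '' Γ' ∪ Sum.inr '' Δ' : Set (L ⊕ L)).Finite :=
      (hΓf.image _).union (hΔf.image _)
    obtain ⟨s, hs⟩ := hfin.exists_finset_coe
    obtain ⟨u, hu, hsu⟩ := chainFin hc hne s (by
      rw [hs]
      apply Set.union_subset
      · exact Set.image_subset_iff.mpr hΓ'
      · exact Set.image_subset_iff.mpr hΔ')
    rw [hs] at hsu
    have h1 : Γ' ⊆ Sum.inl ⁻¹' u := by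
      intro x hx; exact hsu (Set.mem_union_left _ ⟨x, hx, rfl⟩)
    have h2 : Δ' ⊆ Sum.inr ⁻¹' u := by
      intro x hx; exact hsu (Set.mem_union_right _ ⟨x, hx, rfl⟩)
    exact hcS hu (hmono h1 h2 hC)
  have hx : (Sum.inl '' Γ₀ ∪ Sum.inr '' Δ₀ : Set (L ⊕ L)) ∈ S := by
    have e1 : Sum.inl ⁻¹' (Sum.inl '' Γ₀ ∪ Sum.inr '' Δ₀) = Γ₀ := by ext a; simp
    have e2 : Sum.inr ⁻¹' (Sum.inl '' Γ₀ ∪ Sum.inr '' Δ₀) = Δ₀ := by ext a; simp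
    simp only [hS, Set.mem_setOf_eq, e1, e2]; exact h
  obtain ⟨m, hsub, hmax⟩ := zorn_subset_nonempty S hub _ hx
  refine ⟨Sum.inl ⁻¹' m, Sum.inr ⁻¹' m, ?_, ?_, hmax.1, ?_, ?_⟩
  · exact Set.image_subset_iff.mp (le_trans Set.subset_union_left hsub)
  · exact Set.image_subset_iff.mp (le_trans Set.subset_union_right hsub)
  · intro F hF
    have hni : insert (Sum.inl F) m ∉ S := by
      intro hmem
      exact hF (hmax.2 hmem (Set.subset_insert _ _) (Set.mem_insert _ _))
    have hcc : Cons (Sum.inl ⁻¹' insert (Sum.inl F) m) (Sum.inr ⁻¹' insert (Sum.inl F) m) := by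
      by_contra hcc; exact hni hcc
    have e1 : Sum.inl ⁻¹' insert (Sum.inl F) m = insert F (Sum.inl ⁻¹' m) := by
      ext a; simp [Set.mem_insert_iff]
    have e2 : Sum.inr ⁻¹' insert (Sum.inl F) m = Sum.inr ⁻¹' m := by
      ext a; simp [Set.mem_insert_iff]
    rwa [e1, e2] at hcc
  · intro F hF
    have hni : insert (Sum.inr F) m ∉ S := by
      intro hmem
      exact hF (hmax.2 hmem (Set.subset_insert _ _) (Set.mem_insert _ _))
    have hcc : Cons (Sum.inl ⁻¹' insert (Sum.inr F) m) (Sum.inr ⁻¹' insert (Sum.inr F) m) := by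
      by_contra hcc; exact hni hcc
    have e1 : Sum.inl ⁻¹' insert (Sum.inr F) m = Sum.inl ⁻¹' m := by
      ext a; simp [Set.mem_insert_iff]
    have e2 : Sum.inr ⁻¹' insert (Sum.inr F) m = insert F (Sum.inr ⁻¹' m) := by
      ext a; simp [Set.mem_insert_iff]
    rwa [e1, e2] at hcc

lemma maxCE_mem_left {L : Type u} {Cons : Set L → Set L → Prop} {Γ Δ : Set L}
    (hm : MaxCE Cons Γ Δ) (G : L) : ¬ Cons (Γ ∪ {G}) Δ ↔ G ∈ Γ := by
  constructor
  · intro h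
    by_contra hG
    exact h (by rw [Set.union_singleton]; exact hm.2.1 G hG)
  · intro hG
    rw [Set.union_singleton, Set.insert_eq_of_mem hG]
    exact hm.1

lemma maxCE_mem_right {L : Type u} {Cons : Set L → Set L → Prop} {Γ Δ : Set L}
    (hm : MaxCE Cons Γ Δ) (G : L) : ¬ Cons Γ ({G} ∪ Δ) ↔ G ∈ Δ := by
  constructor
  · intro h
    by_contra hG
    exact h (by rw [Set.singleton_union]; exact hm.2.2 G hG)
  · intro hG
    rw [Set.singleton_union, Set.insert_eq_of_mem hG]
    exact hm.1

lemma maxCE_piece {L : Type u} {Cons : Set L → Set L → Prop} (hmono : Monotonic Cons)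
    {Γ Δ : Set L} (hm : MaxCE Cons Γ Δ) {n : ℕ}
    (Fs : Fin n → L) (Sp Sc : Set (Fin n)) :
    ¬ Cons (Γ ∪ Fs '' Sp) (Fs '' Sc ∪ Δ) ↔
      (∀ i ∈ Sp, Fs i ∈ Γ) ∧ (∀ i ∈ Sc, Fs i ∈ Δ) := by
  constructor
  · intro h
    constructor
    · intro i hi
      by_contra hni
      refine h (hmono ?_ Set.subset_union_right (hm.2.1 _ hni))
      exact Set.insert_subset (Set.mem_union_right _ ⟨i, hi, rfl⟩) Set.subset_union_left
    · intro i hi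
      by_contra hni
      refine h (hmono Set.subset_union_left ?_ (hm.2.2 _ hni))
      exact Set.insert_subset (Set.mem_union_left _ ⟨i, hi, rfl⟩) Set.subset_union_right
  · rintro ⟨h1, h2⟩ hcons
    have e1 : Γ ∪ Fs '' Sp = Γ := Set.union_eq_left.mpr (by rintro _ ⟨i, hi, rfl⟩; exact h1 i hi)
    have e2 : Fs '' Sc ∪ Δ = Δ := Set.union_eq_right.mpr (by rintro _ ⟨i, hi, rfl⟩; exact h2 i hi)
    rw [e1, e2] at hcons
    exact hm.1 hcons

/-- The truth function built from regularity data. -/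
noncomputable def tfv {C : Type u} (ar : C → ℕ)
    (Bp Bc : (c : C) → Set (Set (Fin (ar c)) × Set (Fin (ar c))))
    (c : C) (v : Fin (ar c) → Bool × Bool) : Bool × Bool :=
  (decide (∃ B ∈ Bp c, (∀ i ∈ B.1, (v i).1 = true) ∧ (∀ i ∈ B.2, (v i).2 = true)),
   decide (∃ B ∈ Bc c, (∀ i ∈ B.1, (v i).1 = true) ∧ (∀ i ∈ B.2, (v i).2 = true)))

lemma tfkey {A C : Type u} {ar : C → ℕ}
    {Cons : Set (Formula A C ar) → Set (Formula A C ar) → Prop}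
    (hmono : Monotonic Cons)
    {Bp Bc : (c : C) → Set (Set (Fin (ar c)) × Set (Fin (ar c)))}
    (hB : ∀ (c : C) (Γ Δ : Set (Formula A C ar)) (Fs : Fin (ar c) → Formula A C ar),
      (Cons (Γ ∪ {Formula.conn c Fs}) Δ ↔
        ∀ B ∈ Bp c, Cons (Γ ∪ Fs '' B.1) (Fs '' B.2 ∪ Δ)) ∧
      (Cons Γ ({Formula.conn c Fs} ∪ Δ) ↔
        ∀ B ∈ Bc c, Cons (Γ ∪ Fs '' B.1) (Fs '' B.2 ∪ Δ)))
    {Γ Δ : Set (Formula A C ar)} (hm : MaxCE Cons Γ Δ)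
    (c : C) (Fs : Fin (ar c) → Formula A C ar) :
    (decide (Formula.conn c Fs ∈ Γ), decide (Formula.conn c Fs ∈ Δ)) =
      tfv ar Bp Bc c (fun i => (decide (Fs i ∈ Γ), decide (Fs i ∈ Δ))) := by
  have hL : Formula.conn c Fs ∈ Γ ↔
      ∃ B ∈ Bp c, (∀ i ∈ B.1, Fs i ∈ Γ) ∧ (∀ i ∈ B.2, Fs i ∈ Δ) := by
    rw [← maxCE_mem_left hm, (hB c Γ Δ Fs).1]
    constructor
    · intro h
      push_neg at h
      obtain ⟨B, hB1, hB2⟩ := h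
      exact ⟨B, hB1, (maxCE_piece hmono hm Fs B.1 B.2).mp hB2⟩
    · rintro ⟨B, hB1, h2⟩ hall
      exact (maxCE_piece hmono hm Fs B.1 B.2).mpr h2 (hall B hB1)
  have hR : Formula.conn c Fs ∈ Δ ↔
      ∃ B ∈ Bc c, (∀ i ∈ B.1, Fs i ∈ Γ) ∧ (∀ i ∈ B.2, Fs i ∈ Δ) := by
    rw [← maxCE_mem_right hm, (hB c Γ Δ Fs).2]
    constructor
    · intro h
      push_neg at h
      obtain ⟨B, hB1, hB2⟩ := h
      exact ⟨B, hB1, (maxCE_piece hmono hm Fs B.1 B.2).mp hB2⟩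
    · rintro ⟨B, hB1, h2⟩ hall
      exact (maxCE_piece hmono hm Fs B.1 B.2).mpr h2 (hall B hB1)
  unfold tfv
  refine Prod.ext ?_ ?_ <;> simp only [] <;> rw [decide_eq_decide] <;>
    simp only [decide_eq_true_eq]
  · exact hL
  · exact hR

/-- Truncation of `Bool × Bool` avoiding `(true, true)`. -/
noncomputable def trunc3a (x : Bool × Bool) : {v : Bool × Bool // v ≠ (true, true)} :=
  if h : x = (true, true) then ⟨(false, false), by simp⟩ else ⟨x, h⟩

lemma trunc3a_val {x : Bool × Bool} (h : x ≠ (true, true)) : (trunc3a x).val = x := by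
  rw [trunc3a, dif_neg h]

/-- Truncation of `Bool × Bool` avoiding `(false, false)`. -/
noncomputable def trunc3b (x : Bool × Bool) : {v : Bool × Bool // v ≠ (false, false)} :=
  if h : x = (false, false) then ⟨(true, true), by simp⟩ else ⟨x, h⟩

lemma trunc3b_val {x : Bool × Bool} (h : x ≠ (false, false)) : (trunc3b x).val = x := by
  rw [trunc3b, dif_neg h]

/-- maximum truth-functional rank theorems for monotonic,
regular and compact logics. -/
theorem statement_17 {A C : Type u} (ar : C → ℕ)
    (Cons : Set (Formula A C ar) → Set (Formula A C ar) → Prop)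
    (hmono : Monotonic Cons) (hreg : RegularRel Cons) (hcomp : CompactRel Cons) :
    HasTAMixedCard Cons 4 ∧
    ((ReflRel Cons ∨ TransRel Cons) → HasTAMixedCard Cons 3) ∧
    ((ReflRel Cons ∧ TransRel Cons) → HasTAMixedCard Cons 2) := by
  classical
  choose Bp Bc hB using hreg
  have hkey : ∀ {Γ Δ : Set (Formula A C ar)}, MaxCE Cons Γ Δ →
      ∀ (c : C) (Fs : Fin (ar c) → Formula A C ar),
      (decide (Formula.conn c Fs ∈ Γ), decide (Formula.conn c Fs ∈ Δ)) =
        tfv ar Bp Bc c (fun i => (decide (Fs i ∈ Γ), decide (Fs i ∈ Δ))) :=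
    fun hm c Fs => tfkey hmono hB hm c Fs
  have sound : ∀ {Γ₀ Δ₀ Γ Δ : Set (Formula A C ar)},
      Cons Γ₀ Δ₀ → ¬ Cons Γ Δ → Γ₀ ⊆ Γ → ∃ F ∈ Δ₀, F ∉ Δ := by
    intro Γ₀ Δ₀ Γ Δ h hm hsub
    by_contra hc
    push_neg at hc
    exact hm (hmono hsub (fun F hF => hc F hF) h)
  refine ⟨?_, ?_, ?_⟩
  · -- four truth values
    refine ⟨Bool × Bool, inferInstance, by decide,
      {p : Set (Formula A C ar) × Set (Formula A C ar) // MaxCE Cons p.1 p.2},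
      fun F w => (decide (F ∈ w.1.1), decide (F ∈ w.1.2)), tfv ar Bp Bc,
      {v | v.1 = true}, {v | v.2 = false}, ?_, ?_⟩
    · intro Γ₀ Δ₀
      constructor
      · intro h w hDp
        have hsub : Γ₀ ⊆ w.1.1 := by
          intro F hF
          have := hDp ⟨F, hF, rfl⟩
          simpa using this
        obtain ⟨F, hF, hFD⟩ := sound h w.2.1 hsub
        exact ⟨_, ⟨F, hF, rfl⟩, by simpa using hFD⟩
      · intro h
        by_contra hc
        obtain ⟨Γ, Δ, hΓ₀, hΔ₀, hm⟩ := exists_maxCE hmono hcomp hc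
        obtain ⟨v, ⟨F, hF, rfl⟩, hvDc⟩ := h ⟨(Γ, Δ), hm⟩ (by
          rintro v ⟨F, hF, rfl⟩
          simpa using hΓ₀ hF)
        simp only [Set.mem_setOf_eq, decide_eq_false_iff_not] at hvDc
        exact hvDc (hΔ₀ hF)
    · intro c Fs w
      exact hkey w.2 c Fs
  · -- three truth values
    rintro (hrefl | htrans)
    · -- reflexive: (true, true) is excluded
      have hdisj : ∀ {Γ Δ : Set (Formula A C ar)}, MaxCE Cons Γ Δ →
          ∀ F, ¬ (F ∈ Γ ∧ F ∈ Δ) := fun hm F h =>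
        hm.1 (hmono (Set.singleton_subset_iff.mpr h.1)
          (Set.singleton_subset_iff.mpr h.2) (hrefl F))
      refine ⟨{v : Bool × Bool // v ≠ (true, true)}, inferInstance, by decide,
        {p : Set (Formula A C ar) × Set (Formula A C ar) // MaxCE Cons p.1 p.2},
        fun F w => ⟨(decide (F ∈ w.1.1), decide (F ∈ w.1.2)), by
          simp only [ne_eq, Prod.mk.injEq, decide_eq_true_eq, not_and]
          exact fun h1 h2 => hdisj w.2 F ⟨h1, h2⟩⟩,
        fun c v => trunc3a (tfv ar Bp Bc c (fun i => (v i).val)),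
        {v | v.val.1 = true}, {v | v.val.2 = false}, ?_, ?_⟩
      · intro Γ₀ Δ₀
        constructor
        · intro h w hDp
          have hsub : Γ₀ ⊆ w.1.1 := by
            intro F hF
            have := hDp ⟨F, hF, rfl⟩
            simpa using this
          obtain ⟨F, hF, hFD⟩ := sound h w.2.1 hsub
          exact ⟨_, ⟨F, hF, rfl⟩, by simpa using hFD⟩
        · intro h
          by_contra hc
          obtain ⟨Γ, Δ, hΓ₀, hΔ₀, hm⟩ := exists_maxCE hmono hcomp hc
          obtain ⟨v, ⟨F, hF, rfl⟩, hvDc⟩ := h ⟨(Γ, Δ), hm⟩ (by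
            rintro v ⟨F, hF, rfl⟩
            simpa using hΓ₀ hF)
          simp only [Set.mem_setOf_eq, decide_eq_false_iff_not] at hvDc
          exact hvDc (hΔ₀ hF)
      · intro c Fs w
        apply Subtype.ext
        have hk := hkey w.2 c Fs
        have hne : tfv ar Bp Bc c
            (fun i => (decide (Fs i ∈ w.1.1), decide (Fs i ∈ w.1.2))) ≠ (true, true) := by
          rw [← hk]
          simp only [ne_eq, Prod.mk.injEq, decide_eq_true_eq, not_and]
          exact fun h1 h2 => hdisj w.2 _ ⟨h1, h2⟩
        exact hk.trans (trunc3a_val hne).symm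
    · -- transitive: (false, false) is excluded
      have hcov : ∀ {Γ Δ : Set (Formula A C ar)}, MaxCE Cons Γ Δ →
          ∀ F, F ∈ Γ ∨ F ∈ Δ := by
        intro Γ Δ hm F
        obtain ⟨Γ', Δ', hΓ, hΔ, hnc, hcov⟩ := htrans Γ Δ hm.1
        have hΓ' : Γ' ⊆ Γ := by
          intro G hG
          by_contra hnG
          exact hnc (hmono (Set.insert_subset hG hΓ) hΔ (hm.2.1 G hnG))
        have hΔ' : Δ' ⊆ Δ := by
          intro G hG
          by_contra hnG
          exact hnc (hmono hΓ (Set.insert_subset hG hΔ) (hm.2.2 G hnG))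
        have hF : F ∈ Γ' ∪ Δ' := hcov ▸ Set.mem_univ F
        rcases hF with h | h
        · exact Or.inl (hΓ' h)
        · exact Or.inr (hΔ' h)
      refine ⟨{v : Bool × Bool // v ≠ (false, false)}, inferInstance, by decide,
        {p : Set (Formula A C ar) × Set (Formula A C ar) // MaxCE Cons p.1 p.2},
        fun F w => ⟨(decide (F ∈ w.1.1), decide (F ∈ w.1.2)), by
          simp only [ne_eq, Prod.mk.injEq, decide_eq_false_iff_not, not_and, not_not]
          intro h1
          exact (hcov w.2 F).resolve_left h1⟩,
        fun c v => trunc3b (tfv ar Bp Bc c (fun i => (v i).val)),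
        {v | v.val.1 = true}, {v | v.val.2 = false}, ?_, ?_⟩
      · intro Γ₀ Δ₀
        constructor
        · intro h w hDp
          have hsub : Γ₀ ⊆ w.1.1 := by
            intro F hF
            have := hDp ⟨F, hF, rfl⟩
            simpa using this
          obtain ⟨F, hF, hFD⟩ := sound h w.2.1 hsub
          exact ⟨_, ⟨F, hF, rfl⟩, by simpa using hFD⟩
        · intro h
          by_contra hc
          obtain ⟨Γ, Δ, hΓ₀, hΔ₀, hm⟩ := exists_maxCE hmono hcomp hc
          obtain ⟨v, ⟨F, hF, rfl⟩, hvDc⟩ := h ⟨(Γ, Δ), hm⟩ (by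
            rintro v ⟨F, hF, rfl⟩
            simpa using hΓ₀ hF)
          simp only [Set.mem_setOf_eq, decide_eq_false_iff_not] at hvDc
          exact hvDc (hΔ₀ hF)
      · intro c Fs w
        apply Subtype.ext
        have hk := hkey w.2 c Fs
        have hne : tfv ar Bp Bc c
            (fun i => (decide (Fs i ∈ w.1.1), decide (Fs i ∈ w.1.2))) ≠ (false, false) := by
          rw [← hk]
          simp only [ne_eq, Prod.mk.injEq, decide_eq_false_iff_not, not_and, not_not]
          intro h1
          exact (hcov w.2 _).resolve_left h1
        exact hk.trans (trunc3b_val hne).symm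
  · -- two truth values
    rintro ⟨hrefl, htrans⟩
    have hdisj : ∀ {Γ Δ : Set (Formula A C ar)}, MaxCE Cons Γ Δ →
        ∀ F, ¬ (F ∈ Γ ∧ F ∈ Δ) := fun hm F h =>
      hm.1 (hmono (Set.singleton_subset_iff.mpr h.1)
        (Set.singleton_subset_iff.mpr h.2) (hrefl F))
    have hcov : ∀ {Γ Δ : Set (Formula A C ar)}, MaxCE Cons Γ Δ →
        ∀ F, F ∈ Γ ∨ F ∈ Δ := by
      intro Γ Δ hm F
      obtain ⟨Γ', Δ', hΓ, hΔ, hnc, hcov⟩ := htrans Γ Δ hm.1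
      have hΓ' : Γ' ⊆ Γ := by
        intro G hG
        by_contra hnG
        exact hnc (hmono (Set.insert_subset hG hΓ) hΔ (hm.2.1 G hnG))
      have hΔ' : Δ' ⊆ Δ := by
        intro G hG
        by_contra hnG
        exact hnc (hmono hΓ (Set.insert_subset hG hΔ) (hm.2.2 G hnG))
      have hF : F ∈ Γ' ∪ Δ' := hcov ▸ Set.mem_univ F
      rcases hF with h | h
      · exact Or.inl (hΓ' h)
      · exact Or.inr (hΔ' h)
    refine ⟨Bool, inferInstance, by decide,
      {p : Set (Formula A C ar) × Set (Formula A C ar) // MaxCE Cons p.1 p.2},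
      fun F w => decide (F ∈ w.1.1),
      fun c v => (tfv ar Bp Bc c (fun i => (v i, !(v i)))).1,
      {v | v = true}, {v | v = true}, ?_, ?_⟩
    · intro Γ₀ Δ₀
      constructor
      · intro h w hDp
        have hsub : Γ₀ ⊆ w.1.1 := by
          intro F hF
          have := hDp ⟨F, hF, rfl⟩
          simpa using this
        obtain ⟨F, hF, hFD⟩ := sound h w.2.1 hsub
        have hFG : F ∈ w.1.1 := (hcov w.2 F).resolve_right hFD
        exact ⟨_, ⟨F, hF, rfl⟩, by simpa using hFG⟩
      · intro h
        by_contra hc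
        obtain ⟨Γ, Δ, hΓ₀, hΔ₀, hm⟩ := exists_maxCE hmono hcomp hc
        obtain ⟨v, ⟨F, hF, rfl⟩, hvDc⟩ := h ⟨(Γ, Δ), hm⟩ (by
          rintro v ⟨F, hF, rfl⟩
          simpa using hΓ₀ hF)
        simp only [Set.mem_setOf_eq, decide_eq_true_eq] at hvDc
        exact hdisj hm F ⟨hvDc, hΔ₀ hF⟩
    · intro c Fs w
      have hk := hkey w.2 c Fs
      have hnd : (fun i => (decide (Fs i ∈ w.1.1), !(decide (Fs i ∈ w.1.1)))) =
          (fun i => (decide (Fs i ∈ w.1.1), decide (Fs i ∈ w.1.2))) := by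
        funext i
        by_cases hG : Fs i ∈ w.1.1
        · have h2 : Fs i ∉ w.1.2 := fun hh => hdisj w.2 _ ⟨hG, hh⟩
          simp [hG, h2]
        · have h2 : Fs i ∈ w.1.2 := (hcov w.2 _).resolve_left hG
          simp [hG, h2]
      show decide (Formula.conn c Fs ∈ w.1.1) =
        (tfv ar Bp Bc c (fun i => (decide (Fs i ∈ w.1.1), !(decide (Fs i ∈ w.1.1))))).1
      rw [hnd, ← hk]
end

section
/- Let ⊢ be a non-permeable, monotonic, regular and compact consequence relation on a sentential language. Then the least cardinality of a set V of truth values over which ⊢ has a truth-adequate mixed semantics is: exactly 2 if and only if ⊢ is reflexive and transitive; exactly 3 if and only if ⊢ is reflexive or transitive but not both; and exactly 4 if and only if ⊢ is neither reflexive nor transitive. -/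
universe u v w x

/-!
Classify a truth value of a mixed semantics by whether it is premise-designated (in `Dp`)
and whether it is conclusion-designated (in `Dc`). Non-permeability forces values of both
types `(true, true)` and `(false, false)`: without the first the semantics is right-to-left
permeable, without the second left-to-right permeable. A formula refuting `{F} ⊢ {F}` takes a
value of type `(true, false)`, and a counterexample that extends to no complete counterexample
yields a value of type `(false, true)`.

Conversely, take as worlds the maximal counterexamples `(Γ, Δ)`, which exist by compactness
and Zorn's lemma, and value a formula `F` by the type `(F ∈ Γ, F ∉ Δ)`. Regularity makes this
semantics truth-functional, reflexivity excludes the type `(true, false)` and transitivity the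
type `(false, true)`. So the least number of truth values is `2 + [¬ reflexive] + [¬ transitive]`.
-/

section MixedSemantics

variable {L V W : Type*} {Cons : Set L → Set L → Prop} {interp : L → W → V} {Dp Dc : Set V}

theorem isMixedSem_iff : IsMixedSem Cons interp Dp Dc ↔ ∀ Γ Δ,
    (¬ Cons Γ Δ ↔ ∃ w, (∀ F ∈ Γ, interp F w ∈ Dp) ∧ ∀ F ∈ Δ, interp F w ∉ Dc) := by
  refine forall₂_congr fun Γ Δ => ?_
  rw [← not_iff_not (a := Cons Γ Δ)]
  simp [Mixed, Set.subset_def, Set.Nonempty]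

theorem IsMixedSem.not_cons_iff (hsem : IsMixedSem Cons interp Dp Dc) {Γ Δ : Set L} :
    ¬ Cons Γ Δ ↔ ∃ w, (∀ F ∈ Γ, interp F w ∈ Dp) ∧ ∀ F ∈ Δ, interp F w ∉ Dc :=
  isMixedSem_iff.mp hsem Γ Δ

theorem IsMixedSem.rlPermeable_of_disjoint (hsem : IsMixedSem Cons interp Dp Dc)
    (hd : Disjoint Dp Dc) : RLPermeable Cons := by
  intro Γ Δ S h
  by_contra hn
  obtain ⟨w, hΓS, hΔ⟩ := hsem.not_cons_iff.mp hn
  refine hsem.not_cons_iff.mpr ⟨w, fun F hF => hΓS F (Or.inl hF), ?_⟩ h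
  rintro F (hS | hΔF)
  · exact hd.notMem_of_mem_left (hΓS F (Or.inr hS))
  · exact hΔ F hΔF

theorem IsMixedSem.lrPermeable_of_union_eq_univ (hsem : IsMixedSem Cons interp Dp Dc)
    (hc : Dp ∪ Dc = Set.univ) : LRPermeable Cons := by
  intro Γ Δ S h
  by_contra hn
  obtain ⟨w, hΓ, hSΔ⟩ := hsem.not_cons_iff.mp hn
  refine hsem.not_cons_iff.mpr ⟨w, ?_, fun F hF => hSΔ F (Or.inr hF)⟩ h
  rintro F (hΓF | hS)
  · exact hΓ F hΓF
  · have : interp F w ∈ Dp ∪ Dc := hc ▸ Set.mem_univ _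
    exact this.resolve_right (hSΔ F (Or.inl hS))

end MixedSemantics

section DesignationTypes

open Classical in
noncomputable def designation {V : Type*} (Dp Dc : Set V) (v : V) : Bool × Bool :=
  (decide (v ∈ Dp), decide (v ∈ Dc))

open Classical in
noncomputable def designationTypes (R T : Prop) : Finset (Bool × Bool) :=
  Finset.univ.filter fun b => (R → b ≠ (true, false)) ∧ (T → b ≠ (false, true))

theorem mem_designationTypes {R T : Prop} {b : Bool × Bool} :
    b ∈ designationTypes R T ↔ (R → b ≠ (true, false)) ∧ (T → b ≠ (false, true)) := by
  simp [designationTypes]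

open Classical in
theorem card_designationTypes (R T : Prop) :
    (designationTypes R T).card = 2 + (if R then 0 else 1) + (if T then 0 else 1) := by
  by_cases hR : R <;> by_cases hT : T <;> simp [designationTypes, hR, hT] <;> decide

end DesignationTypes

section LowerBound

variable {L V W : Type*} {Cons : Set L → Set L → Prop} {interp : L → W → V} {Dp Dc : Set V}

theorem IsMixedSem.inter_nonempty (hsem : IsMixedSem Cons interp Dp Dc)
    (hnp : ¬ Permeable Cons) : (Dp ∩ Dc).Nonempty := by
  by_contra h
  exact hnp (Or.inr (hsem.rlPermeable_of_disjoint (Set.disjoint_iff_inter_eq_empty.mpr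
    (Set.not_nonempty_iff_eq_empty.mp h))))

theorem IsMixedSem.union_ne_univ (hsem : IsMixedSem Cons interp Dp Dc)
    (hnp : ¬ Permeable Cons) : Dp ∪ Dc ≠ Set.univ :=
  fun h => hnp (Or.inl (hsem.lrPermeable_of_union_eq_univ h))

theorem IsMixedSem.exists_mem_notMem_of_not_reflRel (hsem : IsMixedSem Cons interp Dp Dc)
    (hR : ¬ ReflRel Cons) : ∃ v ∈ Dp, v ∉ Dc := by
  obtain ⟨F, hF⟩ := not_forall.mp hR
  obtain ⟨w, hp, hc⟩ := hsem.not_cons_iff.mp hF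
  exact ⟨interp F w, hp F rfl, hc F rfl⟩

theorem IsMixedSem.exists_notMem_mem_of_not_transRel (hsem : IsMixedSem Cons interp Dp Dc)
    (hT : ¬ TransRel Cons) : ∃ v ∉ Dp, v ∈ Dc := by
  simp only [TransRel, not_forall, not_exists, not_and] at hT
  obtain ⟨Γ, Δ, hΓΔ, hmax⟩ := hT
  obtain ⟨w, hΓ, hΔ⟩ := hsem.not_cons_iff.mp hΓΔ
  set Γw := {F | interp F w ∈ Dp}
  set Δw := {F | interp F w ∉ Dc}
  have hw : ¬ Cons Γw Δw := hsem.not_cons_iff.mpr ⟨w, fun _ h => h, fun _ h => h⟩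
  obtain ⟨F, hF⟩ := (Set.ne_univ_iff_exists_notMem _).mp (hmax Γw Δw hΓ hΔ hw)
  rw [Set.mem_union, not_or] at hF
  exact ⟨interp F w, hF.1, not_not.mp hF.2⟩

theorem IsMixedSem.exists_designation_eq (hsem : IsMixedSem Cons interp Dp Dc)
    (hnp : ¬ Permeable Cons) {b : Bool × Bool}
    (hb : b ∈ designationTypes (ReflRel Cons) (TransRel Cons)) :
    ∃ v, designation Dp Dc v = b := by
  rw [mem_designationTypes] at hb
  obtain ⟨_ | _, _ | _⟩ := b
  · obtain ⟨v, hv⟩ := (Set.ne_univ_iff_exists_notMem _).mp (hsem.union_ne_univ hnp)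
    simp only [Set.mem_union, not_or] at hv
    exact ⟨v, by simp [designation, hv.1, hv.2]⟩
  · obtain ⟨v, hvp, hvc⟩ :=
      hsem.exists_notMem_mem_of_not_transRel fun hT => hb.2 hT rfl
    exact ⟨v, by simp [designation, hvp, hvc]⟩
  · obtain ⟨v, hvp, hvc⟩ :=
      hsem.exists_mem_notMem_of_not_reflRel fun hR => hb.1 hR rfl
    exact ⟨v, by simp [designation, hvp, hvc]⟩
  · obtain ⟨v, hvp, hvc⟩ := hsem.inter_nonempty hnp
    exact ⟨v, by simp [designation, hvp, hvc]⟩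

theorem IsMixedSem.card_designationTypes_le [Fintype V] (hsem : IsMixedSem Cons interp Dp Dc)
    (hnp : ¬ Permeable Cons) :
    (designationTypes (ReflRel Cons) (TransRel Cons)).card ≤ Fintype.card V :=
  calc (designationTypes (ReflRel Cons) (TransRel Cons)).card
      ≤ (Finset.univ.image (designation Dp Dc)).card := Finset.card_le_card fun b hb => by
        obtain ⟨v, rfl⟩ := hsem.exists_designation_eq hnp hb
        exact Finset.mem_image_of_mem _ (Finset.mem_univ v)
    _ ≤ Fintype.card V := Finset.card_image_le

end LowerBound

section IsMaxCounterexample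

variable {L : Type*} {Cons : Set L → Set L → Prop} {p : Set L × Set L}

def IsMaxCounterexample (Cons : Set L → Set L → Prop) (p : Set L × Set L) : Prop :=
  ¬ Cons p.1 p.2 ∧ (∀ F ∉ p.1, Cons (p.1 ∪ {F}) p.2) ∧ (∀ F ∉ p.2, Cons p.1 ({F} ∪ p.2))

theorem IsMaxCounterexample.cons_union_iff (hmono : Monotonic Cons)
    (hp : IsMaxCounterexample Cons p) {X Y : Set L} :
    Cons (p.1 ∪ X) (Y ∪ p.2) ↔ ¬ (X ⊆ p.1 ∧ Y ⊆ p.2) := by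
  constructor
  · rintro h ⟨hX, hY⟩
    rw [Set.union_eq_left.mpr hX, Set.union_eq_right.mpr hY] at h
    exact hp.1 h
  · intro h
    rcases not_and_or.mp h with hX | hY
    · obtain ⟨F, hFX, hF⟩ := Set.not_subset.mp hX
      exact hmono (Set.union_subset_union_right _ (Set.singleton_subset_iff.mpr hFX))
        Set.subset_union_right (hp.2.1 F hF)
    · obtain ⟨F, hFY, hF⟩ := Set.not_subset.mp hY
      exact hmono Set.subset_union_left
        (Set.union_subset_union_left _ (Set.singleton_subset_iff.mpr hFY)) (hp.2.2 F hF)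

theorem IsMaxCounterexample.mem_fst_iff (hp : IsMaxCounterexample Cons p) {F : L} :
    F ∈ p.1 ↔ ¬ Cons (p.1 ∪ {F}) p.2 := by
  refine ⟨fun hF => ?_, fun h => not_not.mp fun hF => h (hp.2.1 F hF)⟩
  rw [Set.union_singleton, Set.insert_eq_of_mem hF]
  exact hp.1

theorem IsMaxCounterexample.mem_snd_iff (hp : IsMaxCounterexample Cons p) {F : L} :
    F ∈ p.2 ↔ ¬ Cons p.1 ({F} ∪ p.2) := by
  refine ⟨fun hF => ?_, fun h => not_not.mp fun hF => h (hp.2.2 F hF)⟩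
  rw [Set.singleton_union, Set.insert_eq_of_mem hF]
  exact hp.1

theorem IsMaxCounterexample.mem_fst_iff_exists (hmono : Monotonic Cons)
    (hp : IsMaxCounterexample Cons p) {G : L} {ι : Type*} {I : Set ι} {X Y : ι → Set L}
    (hG : Cons (p.1 ∪ {G}) p.2 ↔ ∀ i ∈ I, Cons (p.1 ∪ X i) (Y i ∪ p.2)) :
    G ∈ p.1 ↔ ∃ i ∈ I, X i ⊆ p.1 ∧ Y i ⊆ p.2 := by
  simp only [hp.mem_fst_iff, hG, hp.cons_union_iff hmono, not_forall, not_not, exists_prop]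

theorem IsMaxCounterexample.mem_snd_iff_exists (hmono : Monotonic Cons)
    (hp : IsMaxCounterexample Cons p) {G : L} {ι : Type*} {I : Set ι} {X Y : ι → Set L}
    (hG : Cons p.1 ({G} ∪ p.2) ↔ ∀ i ∈ I, Cons (p.1 ∪ X i) (Y i ∪ p.2)) :
    G ∈ p.2 ↔ ∃ i ∈ I, X i ⊆ p.1 ∧ Y i ⊆ p.2 := by
  simp only [hp.mem_snd_iff, hG, hp.cons_union_iff hmono, not_forall, not_not, exists_prop]

theorem IsMaxCounterexample.notMem_snd_of_mem_fst (hmono : Monotonic Cons) (hR : ReflRel Cons)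
    (hp : IsMaxCounterexample Cons p) {F : L} (hF : F ∈ p.1) : F ∉ p.2 := fun hF' =>
  hp.1 (hmono (Set.singleton_subset_iff.mpr hF) (Set.singleton_subset_iff.mpr hF') (hR F))

theorem IsMaxCounterexample.union_eq_univ (hmono : Monotonic Cons) (hT : TransRel Cons)
    (hp : IsMaxCounterexample Cons p) : p.1 ∪ p.2 = Set.univ := by
  obtain ⟨Γ, Δ, hΓ, hΔ, hΓΔ, hcover⟩ := hT p.1 p.2 hp.1
  -- by maximality, the complete extension `(Γ, Δ)` of `p` is `p` itself
  refine Set.eq_univ_of_forall fun F => ?_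
  by_contra hF
  rw [Set.mem_union, not_or] at hF
  rcases (hcover ▸ Set.mem_univ F : F ∈ Γ ∪ Δ) with hFΓ | hFΔ
  · exact hΓΔ (hmono (Set.union_subset hΓ (Set.singleton_subset_iff.mpr hFΓ)) hΔ (hp.2.1 F hF.1))
  · exact hΓΔ (hmono hΓ (Set.union_subset (Set.singleton_subset_iff.mpr hFΔ) hΔ) (hp.2.2 F hF.2))

theorem IsChain.exists_fst_snd_subset {c : Set (Set L × Set L)} (hc : IsChain (· ≤ ·) c)
    (hne : c.Nonempty) {Γ Δ : Set L} (hΓ : Γ.Finite) (hΔ : Δ.Finite)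
    (hΓc : Γ ⊆ ⋃ p ∈ c, p.1) (hΔc : Δ ⊆ ⋃ p ∈ c, p.2) : ∃ p ∈ c, Γ ⊆ p.1 ∧ Δ ⊆ p.2 := by
  have hΓc' : (hΓ.toFinset : Set L) ⊆ ⋃ p ∈ c, p.1 := by simpa using hΓc
  have hΔc' : (hΔ.toFinset : Set L) ⊆ ⋃ p ∈ c, p.2 := by simpa using hΔc
  obtain ⟨p₁, hp₁, hΓp₁⟩ := (hc.directedOn.mono fun _ _ h => h.1)
    |>.exists_mem_subset_of_finset_subset_biUnion (f := Prod.fst) hne hΓc'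
  obtain ⟨p₂, hp₂, hΔp₂⟩ := (hc.directedOn.mono fun _ _ h => h.2)
    |>.exists_mem_subset_of_finset_subset_biUnion (f := Prod.snd) hne hΔc'
  obtain ⟨p, hp, h₁, h₂⟩ := hc.directedOn p₁ hp₁ p₂ hp₂
  rw [Set.Finite.coe_toFinset] at hΓp₁ hΔp₂
  exact ⟨p, hp, hΓp₁.trans h₁.1, hΔp₂.trans h₂.2⟩

theorem exists_isMaxCounterexample (hmono : Monotonic Cons) (hcomp : CompactRel Cons) {Γ Δ : Set L}
    (h : ¬ Cons Γ Δ) : ∃ p, Γ ⊆ p.1 ∧ Δ ⊆ p.2 ∧ IsMaxCounterexample Cons p := by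
  obtain ⟨m, hle, hm⟩ := zorn_le_nonempty₀ {p : Set L × Set L | ¬ Cons p.1 p.2}
    (fun c hcS hc q hq => by
      refine ⟨(⋃ p ∈ c, p.1, ⋃ p ∈ c, p.2), fun hcons => ?_,
        fun p hp => ⟨Set.subset_biUnion_of_mem hp, Set.subset_biUnion_of_mem hp⟩⟩
      obtain ⟨Γ', Δ', hΓ', hΔ', hΓ'fin, hΔ'fin, hcons'⟩ := hcomp _ _ hcons
      obtain ⟨p, hp, hΓp, hΔp⟩ := hc.exists_fst_snd_subset ⟨q, hq⟩ hΓ'fin hΔ'fin hΓ' hΔ'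
      exact hcS hp (hmono hΓp hΔp hcons'))
    (Γ, Δ) h
  refine ⟨m, hle.1, hle.2, hm.1, fun F hF => ?_, fun F hF => ?_⟩
  · by_contra hcons
    exact hF ((hm.2 (y := (m.1 ∪ {F}, m.2)) hcons ⟨Set.subset_union_left, le_rfl⟩).1
      (Set.mem_union_right _ rfl))
  · by_contra hcons
    exact hF ((hm.2 (y := (m.1, {F} ∪ m.2)) hcons ⟨le_rfl, Set.subset_union_right⟩).2
      (Set.mem_union_left _ rfl))

end IsMaxCounterexample

section Canonical

variable {L : Type*} {Cons : Set L → Set L → Prop}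

open Classical in
noncomputable def canonicalInterp (Cons : Set L → Set L → Prop) (F : L)
    (p : {p : Set L × Set L // IsMaxCounterexample Cons p}) : Bool × Bool :=
  (decide (F ∈ p.1.1), !decide (F ∈ p.1.2))

theorem isMixedSem_canonicalInterp (hmono : Monotonic Cons) (hcomp : CompactRel Cons) :
    IsMixedSem Cons (canonicalInterp Cons) {b | b.1 = true} {b | b.2 = true} := by
  refine isMixedSem_iff.mpr fun Γ Δ => ⟨fun h => ?_, ?_⟩
  · obtain ⟨p, hΓ, hΔ, hp⟩ := exists_isMaxCounterexample hmono hcomp h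
    refine ⟨⟨p, hp⟩, fun F hF => ?_, fun F hF => ?_⟩
    · simpa [canonicalInterp] using hΓ hF
    · simpa [canonicalInterp] using hΔ hF
  · rintro ⟨⟨p, hp⟩, hΓ, hΔ⟩ hΓΔ
    refine hp.1 (hmono (fun F hF => ?_) (fun F hF => ?_) hΓΔ)
    · simpa [canonicalInterp] using hΓ F hF
    · simpa [canonicalInterp] using hΔ F hF

end Canonical

section CanonicalTruthFunctions

variable {A C : Type u} {ar : C → ℕ}

def FitsRule {n : ℕ} (B : Set (Fin n) × Set (Fin n)) (v : Fin n → Bool × Bool) : Prop :=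
  (∀ i ∈ B.1, (v i).1 = true) ∧ ∀ i ∈ B.2, (v i).2 = false

open Classical in
noncomputable def canonicalTF (Bp Bc : (c : C) → Set (Set (Fin (ar c)) × Set (Fin (ar c))))
    (c : C) (v : Fin (ar c) → Bool × Bool) : Bool × Bool :=
  (decide (∃ B ∈ Bp c, FitsRule B v), !decide (∃ B ∈ Bc c, FitsRule B v))

theorem compositional_canonicalInterp
    {Cons : Set (Formula A C ar) → Set (Formula A C ar) → Prop} (hmono : Monotonic Cons)
    {Bp Bc : (c : C) → Set (Set (Fin (ar c)) × Set (Fin (ar c)))}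
    (hB : ∀ c Γ Δ (Fs : Fin (ar c) → Formula A C ar),
      (Cons (Γ ∪ {Formula.conn c Fs}) Δ ↔ ∀ B ∈ Bp c, Cons (Γ ∪ Fs '' B.1) (Fs '' B.2 ∪ Δ)) ∧
      (Cons Γ ({Formula.conn c Fs} ∪ Δ) ↔ ∀ B ∈ Bc c, Cons (Γ ∪ Fs '' B.1) (Fs '' B.2 ∪ Δ))) :
    Compositional (canonicalInterp Cons) (canonicalTF Bp Bc) := by
  rintro c Fs ⟨p, hp⟩
  have h₁ := hp.mem_fst_iff_exists hmono (hB c p.1 p.2 Fs).1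
  have h₂ := hp.mem_snd_iff_exists hmono (hB c p.1 p.2 Fs).2
  refine Prod.ext (decide_eq_decide.mpr ?_) (congrArg (!·) (decide_eq_decide.mpr ?_))
  · simp [h₁, canonicalInterp, FitsRule, Set.subset_def]
  · simp [h₂, canonicalInterp, FitsRule, Set.subset_def]

end CanonicalTruthFunctions

section TruthValueCount

variable {A C : Type u} {ar : C → ℕ}
  {Cons : Set (Formula A C ar) → Set (Formula A C ar) → Prop}

theorem HasTAMixedCard.mono {m n : ℕ} (h : HasTAMixedCard Cons m) (hmn : m ≤ n) :
    HasTAMixedCard Cons n := by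
  obtain ⟨V, hV, hcard, hsem⟩ := h
  exact ⟨V, hV, hcard.trans hmn, hsem⟩

theorem hasTAMixedCard_of_forall_mem {V : Type} {W : Type u} {interp : Formula A C ar → W → V}
    {tf : (c : C) → (Fin (ar c) → V) → V} {Dp Dc : Set V}
    (hsem : IsMixedSem Cons interp Dp Dc) (hcomp : Compositional interp tf)
    (S : Finset V) (hne : S.Nonempty) (hS : ∀ F w, interp F w ∈ S) :
    HasTAMixedCard Cons S.card := by
  classical
  -- outside the tuples of realised values the truth-functions may be redefined freely
  refine ⟨S, inferInstance, (Fintype.card_coe S).le, W, fun F w => ⟨interp F w, hS F w⟩,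
    fun c v => if h : tf c (fun i => (v i).1) ∈ S then ⟨_, h⟩ else ⟨_, hne.choose_spec⟩,
    Subtype.val ⁻¹' Dp, Subtype.val ⁻¹' Dc, fun Γ Δ => ?_, fun c Fs w => ?_⟩
  · rw [hsem]
    simp only [Mixed, ← Set.image_subset_iff, ← Set.image_inter_nonempty_iff, Set.image_image]
  · simp only [hcomp c Fs w, dif_pos (hcomp c Fs w ▸ hS _ w)]

theorem hasTAMixedCard_card_designationTypes (hmono : Monotonic Cons) (hreg : RegularRel Cons)
    (hcomp : CompactRel Cons) :
    HasTAMixedCard Cons (designationTypes (ReflRel Cons) (TransRel Cons)).card := by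
  choose Bp Bc hB using hreg
  refine hasTAMixedCard_of_forall_mem (isMixedSem_canonicalInterp hmono hcomp)
    (compositional_canonicalInterp hmono hB) _ ⟨(true, true), by simp [mem_designationTypes]⟩
    fun F ⟨p, hp⟩ => mem_designationTypes.mpr ⟨fun hR h => ?_, fun hT h => ?_⟩
  · simp only [canonicalInterp, Prod.mk.injEq, decide_eq_true_eq, Bool.not_eq_false'] at h
    exact hp.notMem_snd_of_mem_fst hmono hR h.1 h.2
  · have hF : F ∈ p.1 ∪ p.2 := hp.union_eq_univ hmono hT ▸ Set.mem_univ F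
    simp only [canonicalInterp, Prod.mk.injEq, decide_eq_false_iff_not, Bool.not_eq_true'] at h
    exact hF.elim h.1 h.2

theorem HasTAMixedCard.card_designationTypes_le (hnp : ¬ Permeable Cons) {n : ℕ}
    (h : HasTAMixedCard Cons n) : (designationTypes (ReflRel Cons) (TransRel Cons)).card ≤ n := by
  obtain ⟨V, _, hcard, W, interp, tf, Dp, Dc, hsem, -⟩ := h
  exact (hsem.card_designationTypes_le hnp).trans hcard

theorem hasTAMixedCard_iff (hnp : ¬ Permeable Cons) (hmono : Monotonic Cons)
    (hreg : RegularRel Cons) (hcomp : CompactRel Cons) {n : ℕ} :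
    HasTAMixedCard Cons n ↔ (designationTypes (ReflRel Cons) (TransRel Cons)).card ≤ n :=
  ⟨fun h => h.card_designationTypes_le hnp,
    (hasTAMixedCard_card_designationTypes hmono hreg hcomp).mono⟩

end TruthValueCount

/-- exact truth-functional rank theorems for non-permeable,
monotonic, regular and compact logics.  "The least cardinality is exactly n" is
rendered as: there is a truth-adequate mixed semantics over at most n truth
values, but none over at most n-1 truth values. -/
theorem statement_18 {A C : Type u} (ar : C → ℕ)
    (Cons : Set (Formula A C ar) → Set (Formula A C ar) → Prop)
    (hnp : ¬ Permeable Cons) (hmono : Monotonic Cons)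
    (hreg : RegularRel Cons) (hcomp : CompactRel Cons) :
    ((HasTAMixedCard Cons 2 ∧ ¬ HasTAMixedCard Cons 1) ↔
      (ReflRel Cons ∧ TransRel Cons)) ∧
    ((HasTAMixedCard Cons 3 ∧ ¬ HasTAMixedCard Cons 2) ↔
      ((ReflRel Cons ∨ TransRel Cons) ∧ ¬ (ReflRel Cons ∧ TransRel Cons))) ∧
    ((HasTAMixedCard Cons 4 ∧ ¬ HasTAMixedCard Cons 3) ↔
      (¬ ReflRel Cons ∧ ¬ TransRel Cons)) := by
  simp only [hasTAMixedCard_iff hnp hmono hreg hcomp, card_designationTypes]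
  by_cases hR : ReflRel Cons <;> by_cases hT : TransRel Cons <;> simp [hR, hT]
end

section
/- Let a consequence relation ⊢ on a sentential language have a strong intersective mixed semantics over a set V₁ of truth values, with truth-functions ⟦c⟧₁ for the connectives and truth-relation |≡₁ equal to the intersection of the mixed relations |≡_{D_p^λ,D_c^λ} for λ ∈ Λ. Let ρ : V₁ → V₂ be a surjection which is a strong g-reduction, i.e.: (relation-g-reduction) for all γ, γ', δ, δ' ⊆ V₁, if ρ(γ) = ρ(γ') and ρ(δ) = ρ(δ') (as images of sets) then γ |≡₁ δ iff γ' |≡₁ δ'; and (C-g-reduction, for every n-ary connective c) for all x₁,…,xₙ, x₁',…,xₙ' ∈ V₁, if ρ(x_i) = ρ(x_i') for all i then ρ(⟦c⟧₁(x₁,…,xₙ)) = ρ(⟦c⟧₁(x₁',…,xₙ')). Then ⊢ has a strong intersective mixed semantics over V₂ (with family (ρ(D_p^λ), ρ(D_c^λ))_{λ∈Λ}). -/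
universe u v w x

/-- a strong g-reduction of a strong intersective mixed semantics
yields a strong intersective mixed semantics over the reduced set of truth
values, with family `(ρ(D_p^λ), ρ(D_c^λ))`. -/
theorem statement_19 {A C : Type u} (ar : C → ℕ)
    (Cons : Set (Formula A C ar) → Set (Formula A C ar) → Prop)
    {V₁ : Type v} {V₂ : Type w} {Λ : Type x}
    (tf1 : (c : C) → (Fin (ar c) → V₁) → V₁)
    (Dp Dc : Λ → Set V₁)
    (hadeq : ∀ Γ Δ : Set (Formula A C ar), Cons Γ Δ ↔
      ∀ (v : A → V₁) (l : Λ),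
        Mixed (Dp l) (Dc l)
          ((fun F => evalF tf1 v F) '' Γ) ((fun F => evalF tf1 v F) '' Δ))
    (ρ : V₁ → V₂) (hsurj : Function.Surjective ρ)
    (hrel : ∀ γ γ' δ δ' : Set V₁, ρ '' γ = ρ '' γ' → ρ '' δ = ρ '' δ' →
      ((∀ l : Λ, Mixed (Dp l) (Dc l) γ δ) ↔ (∀ l : Λ, Mixed (Dp l) (Dc l) γ' δ')))
    (hconn : ∀ (c : C) (y y' : Fin (ar c) → V₁),
      (∀ i, ρ (y i) = ρ (y' i)) → ρ (tf1 c y) = ρ (tf1 c y')) :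
    ∃ tf2 : (c : C) → (Fin (ar c) → V₂) → V₂,
      ∀ Γ Δ : Set (Formula A C ar), Cons Γ Δ ↔
        ∀ (v : A → V₂) (l : Λ),
          Mixed (ρ '' Dp l) (ρ '' Dc l)
            ((fun F => evalF tf2 v F) '' Γ) ((fun F => evalF tf2 v F) '' Δ) := by
  classical
  set s := Function.surjInv hsurj with hs
  have hρs : ∀ y, ρ (s y) = y := fun y => Function.surjInv_eq hsurj y
  set tf2 : (c : C) → (Fin (ar c) → V₂) → V₂ :=
    fun c y => ρ (tf1 c (fun i => s (y i))) with htf2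
  refine ⟨tf2, ?_⟩
  -- evaluation commutes with ρ
  have hval : ∀ (v₁ : A → V₁) (F : Formula A C ar),
      evalF tf2 (fun a => ρ (v₁ a)) F = ρ (evalF tf1 v₁ F) := by
    intro v₁ F
    induction F with
    | atom a => rfl
    | conn c Fs ih =>
      show tf2 c (fun i => evalF tf2 (fun a => ρ (v₁ a)) (Fs i))
          = ρ (tf1 c (fun i => evalF tf1 v₁ (Fs i)))
      rw [htf2] at ih ⊢
      apply hconn
      intro i
      simp only
      rw [ih i, hρs]
  intro Γ Δ
  constructor
  · intro h v l
    set v₁ : A → V₁ := fun a => s (v a) with hv₁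
    have hvv : (fun a => ρ (v₁ a)) = v := by funext a; exact hρs (v a)
    set γ : Set V₁ := (fun F => evalF tf1 v₁ F) '' Γ with hγ
    set δ : Set V₁ := (fun F => evalF tf1 v₁ F) '' Δ with hδ
    have himΓ : (fun F => evalF tf2 v F) '' Γ = ρ '' γ := by
      rw [hγ, Set.image_image]
      rw [← hvv]
      exact Set.image_congr (fun F _ => hval v₁ F)
    have himΔ : (fun F => evalF tf2 v F) '' Δ = ρ '' δ := by
      rw [hδ, Set.image_image]
      rw [← hvv]
      exact Set.image_congr (fun F _ => hval v₁ F)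
    rw [himΓ, himΔ]
    intro hsub
    -- build γₗ ⊆ Dp l with same image
    set γₗ : Set V₁ := {d | d ∈ Dp l ∧ ρ d ∈ ρ '' γ} with hγₗ
    have himg : ρ '' γ = ρ '' γₗ := by
      apply Set.Subset.antisymm
      · rintro y ⟨x, hx, rfl⟩
        have : ρ x ∈ ρ '' Dp l := hsub ⟨x, hx, rfl⟩
        obtain ⟨d, hd, hdx⟩ := this
        exact ⟨d, ⟨hd, hdx ▸ ⟨x, hx, rfl⟩⟩, hdx⟩
      · rintro y ⟨d, ⟨_, hd2⟩, rfl⟩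
        exact hd2
    have hmix : ∀ l' : Λ, Mixed (Dp l') (Dc l') γ δ :=
      fun l' => (hadeq Γ Δ).1 h v₁ l'
    have hmix' : ∀ l' : Λ, Mixed (Dp l') (Dc l') γₗ δ :=
      (hrel γ γₗ δ δ himg rfl).1 hmix
    obtain ⟨x, hxδ, hxDc⟩ := hmix' l (fun d hd => hd.1)
    exact ⟨ρ x, ⟨x, hxδ, rfl⟩, ⟨x, hxDc, rfl⟩⟩
  · intro h
    rw [hadeq]
    intro v₁ l
    set γ : Set V₁ := (fun F => evalF tf1 v₁ F) '' Γ with hγ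
    set δ : Set V₁ := (fun F => evalF tf1 v₁ F) '' Δ with hδ
    have h2 := h (fun a => ρ (v₁ a))
    have himΓ : (fun F => evalF tf2 (fun a => ρ (v₁ a)) F) '' Γ = ρ '' γ := by
      rw [hγ, Set.image_image]
      exact Set.image_congr (fun F _ => hval v₁ F)
    have himΔ : (fun F => evalF tf2 (fun a => ρ (v₁ a)) F) '' Δ = ρ '' δ := by
      rw [hδ, Set.image_image]
      exact Set.image_congr (fun F _ => hval v₁ F)
    rw [himΓ, himΔ] at h2
    set γ' : Set V₁ := ρ ⁻¹' (ρ '' γ) with hγ'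
    set δ' : Set V₁ := ρ ⁻¹' (ρ '' δ) with hδ'
    have himγ' : ρ '' γ' = ρ '' γ :=
      Set.image_preimage_eq_of_subset (by
        rintro y ⟨x, _, rfl⟩; exact ⟨x, rfl⟩)
    have himδ' : ρ '' δ' = ρ '' δ :=
      Set.image_preimage_eq_of_subset (by
        rintro y ⟨x, _, rfl⟩; exact ⟨x, rfl⟩)
    have hmix' : ∀ l' : Λ, Mixed (Dp l') (Dc l') γ' δ' := by
      intro l' hsub
      have hsub2 : ρ '' γ ⊆ ρ '' Dp l' := by
        rintro y ⟨x, hx, rfl⟩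
        have hxγ' : x ∈ γ' := ⟨x, hx, rfl⟩
        exact ⟨x, hsub hxγ', rfl⟩
      obtain ⟨y, hy1, hy2⟩ := h2 l' hsub2
      obtain ⟨d, hdDc, hdy⟩ := hy2
      refine ⟨d, ?_, hdDc⟩
      show ρ d ∈ ρ '' δ
      rw [hdy]
      exact hy1
    exact (hrel γ' γ δ' δ himγ' himδ' ).1 hmix' l
end
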